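/- Let f : ℝ^N → ℝ be continuously differentiable and M ⊆ ℝ^N closed. Suppose a sequence (x_n) ⊆ M satisfies: (A1) f(x_{n+1}) − f(x_n) ≤ −σ g⁻(x_n) ‖x_{n+1} − x_n‖ for some σ > 0 and all n; and (A2) g⁻(x_n) = 0 implies x_{n+1} = x_n. Suppose x* is a cluster point of (x_n) at which the Łojasiewicz inequality for the projected antigradient holds: there are δ, Λ > 0 and θ ∈ (0, 1/2] with |f(y) − f(x*)|^{1−θ} ≤ Λ g⁻(y) for all y ∈ M with ‖y − x*‖ < δ. Then x_n → x*. -/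

import Mathlib

/-! The values `f (x n)` decrease to `f x*`, so `H n = C (f (x n) - f x*)^θ` is a nonnegative
sequence tending to `0`. Near `x*`, (A1), the Łojasiewicz inequality and the concavity of
`t ↦ t^θ` bound each step `‖x (n+1) - x n‖` by `H n - H (n+1)`. Once some `x n` lies close
to `x*` with `H n` small, the telescoped steps keep the sequence in the Łojasiewicz ball, so it
has finite length and, having `x*` as a cluster point, converges to it. -/

open scoped RealInnerProductSpace

/-- Sequential tangent cone of `M ⊆ ℝ^N` at `x`. -/
def seqTangentCone {N : ℕ} (M : Set (EuclideanSpace ℝ (Fin N)))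
    (x : EuclideanSpace ℝ (Fin N)) : Set (EuclideanSpace ℝ (Fin N)) :=
  {ξ | ∃ (X : ℕ → EuclideanSpace ℝ (Fin N)) (a : ℕ → ℝ),
      (∀ i, X i ∈ M) ∧ (∀ i, 0 < a i) ∧
      Filter.Tendsto X Filter.atTop (nhds x) ∧
      Filter.Tendsto (fun i => a i • (X i - x)) Filter.atTop (nhds ξ)}

/-- `g⁻(y)`: the norm of the projection of the antigradient `−∇f(y)` onto the tangent
cone of `M` at `y`, characterized as `max{ −∇f(y)ᵀξ : ξ ∈ T_y M, ‖ξ‖ ≤ 1 }`. -/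
noncomputable def gNeg {N : ℕ} (f : EuclideanSpace ℝ (Fin N) → ℝ)
    (M : Set (EuclideanSpace ℝ (Fin N))) (y : EuclideanSpace ℝ (Fin N)) : ℝ :=
  sSup ((fun ξ => ⟪-(gradient f y), ξ⟫) '' {ξ | ξ ∈ seqTangentCone M y ∧ ‖ξ‖ ≤ 1})

open Filter Topology

lemma zero_mem_seqTangentCone {N : ℕ} {M : Set (EuclideanSpace ℝ (Fin N))}
    {y : EuclideanSpace ℝ (Fin N)} (hy : y ∈ M) : 0 ∈ seqTangentCone M y :=
  ⟨fun _ => y, fun _ => 1, fun _ => hy, fun _ => one_pos, tendsto_const_nhds, by simp⟩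

lemma gNeg_nonneg {N : ℕ} (f : EuclideanSpace ℝ (Fin N) → ℝ)
    (M : Set (EuclideanSpace ℝ (Fin N))) {y : EuclideanSpace ℝ (Fin N)} (hy : y ∈ M) :
    0 ≤ gNeg f M y := by
  refine le_csSup ⟨‖gradient f y‖, ?_⟩ ⟨0, ⟨zero_mem_seqTangentCone hy, by simp⟩, by simp⟩
  rintro r ⟨ξ, ⟨-, hξ⟩, rfl⟩
  calc ⟪-gradient f y, ξ⟫ ≤ ‖-gradient f y‖ * ‖ξ‖ := real_inner_le_norm _ _
    _ ≤ ‖gradient f y‖ := by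
      rw [norm_neg]; exact mul_le_of_le_one_right (norm_nonneg _) hξ

lemma Antitone.tendsto_of_mapClusterPt {α : Type*} [TopologicalSpace α]
    [ConditionallyCompleteLinearOrder α] [OrderTopology α] [NoMinOrder α]
    [FirstCountableTopology α] {u : ℕ → α} {a : α} (hu : Antitone u)
    (ha : MapClusterPt a atTop u) : Tendsto u atTop (𝓝 a) := by
  obtain ⟨ψ, hψ, hlim⟩ := ha.tendsto_subseq
  exact (tendsto_iff_tendsto_subseq_of_antitone hu hψ.tendsto_atTop).2 hlim

/-- From weighted AM-GM, `a^(1-θ) b^θ ≤ (1-θ) a + θ b`. -/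
lemma mul_sub_le_rpow_mul_rpow_sub {a b θ : ℝ} (ha : 0 ≤ a) (hb : 0 ≤ b) (hθ₀ : 0 ≤ θ)
    (hθ₁ : θ ≤ 1) : θ * (a - b) ≤ a ^ (1 - θ) * (a ^ θ - b ^ θ) := by
  have amgm := Real.geom_mean_le_arith_mean2_weighted (sub_nonneg.2 hθ₁) hθ₀ ha hb (by ring)
  have hsplit : a ^ (1 - θ) * a ^ θ = a := by
    rw [← Real.rpow_add' ha (by norm_num), sub_add_cancel, Real.rpow_one]
  rw [mul_sub (a ^ (1 - θ)), hsplit]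
  linarith

lemma le_mul_rpow_sub_rpow_of_descent {a b g d σ θ Λ : ℝ} (hb : 0 ≤ b) (hba : b ≤ a)
    (hg : 0 < g) (hσ : 0 < σ) (hθ₀ : 0 < θ) (hθ₁ : θ ≤ 1)
    (hdesc : σ * g * d ≤ a - b) (hloj : a ^ (1 - θ) ≤ Λ * g) :
    d ≤ Λ / (σ * θ) * (a ^ θ - b ^ θ) := by
  have hpow : 0 ≤ a ^ θ - b ^ θ := sub_nonneg.2 (Real.rpow_le_rpow hb hba hθ₀.le)
  have key : g * (σ * θ * d) ≤ g * (Λ * (a ^ θ - b ^ θ)) :=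
    calc g * (σ * θ * d) = θ * (σ * g * d) := by ring
      _ ≤ θ * (a - b) := mul_le_mul_of_nonneg_left hdesc hθ₀.le
      _ ≤ a ^ (1 - θ) * (a ^ θ - b ^ θ) :=
        mul_sub_le_rpow_mul_rpow_sub (hb.trans hba) hb hθ₀.le hθ₁
      _ ≤ Λ * g * (a ^ θ - b ^ θ) := mul_le_mul_of_nonneg_right hloj hpow
      _ = g * (Λ * (a ^ θ - b ^ θ)) := by ring
  rw [div_mul_eq_mul_div, le_div_iff₀ (by positivity)]
  linarith [le_of_mul_le_mul_left key hg]

section FiniteLength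

variable {α : Type*} [PseudoMetricSpace α] {x : ℕ → α} {H : ℕ → ℝ}

lemma dist_le_sub_of_forall_dist_succ_le {m n : ℕ} (hmn : m ≤ n)
    (h : ∀ k, m ≤ k → k < n → dist (x k) (x (k + 1)) ≤ H k - H (k + 1)) :
    dist (x m) (x n) ≤ H m - H n :=
  calc dist (x m) (x n) ≤ ∑ k ∈ Finset.Ico m n, dist (x k) (x (k + 1)) :=
        dist_le_Ico_sum_dist x hmn
    _ ≤ ∑ k ∈ Finset.Ico m n, (H k - H (k + 1)) :=
        Finset.sum_le_sum fun k hk => h k (Finset.mem_Ico.1 hk).1 (Finset.mem_Ico.1 hk).2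
    _ = H m - H n := by
        rw [← neg_sub, ← Finset.sum_Ico_sub (fun k => H k) hmn, ← Finset.sum_neg_distrib]
        simp only [neg_sub]

lemma forall_dist_lt_of_dist_add_lt {a : α} {δ : ℝ} {n₀ : ℕ} (hH : ∀ n, 0 ≤ H n)
    (hstep : ∀ n, dist (x n) a < δ → dist (x n) (x (n + 1)) ≤ H n - H (n + 1))
    (h₀ : dist (x n₀) a + H n₀ < δ) : ∀ n, n₀ ≤ n → dist (x n) a < δ := by
  intro n
  induction n using Nat.strong_induction_on with
  | _ n ih =>
    intro hn
    have := dist_le_sub_of_forall_dist_succ_le hn fun k hk hkn => hstep k (ih k hkn hk)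
    linarith [dist_triangle_left (x n) a (x n₀), hH n]

theorem tendsto_of_dist_succ_le_sub_of_mapClusterPt {a : α} {δ : ℝ} (hδ : 0 < δ)
    (hH : ∀ n, 0 ≤ H n) (hH₀ : Tendsto H atTop (𝓝 0))
    (hstep : ∀ n, dist (x n) a < δ → dist (x n) (x (n + 1)) ≤ H n - H (n + 1))
    (ha : MapClusterPt a atTop x) : Tendsto x atTop (𝓝 a) := by
  obtain ⟨n₀, hxn₀, hHn₀⟩ : ∃ n₀, dist (x n₀) a < δ / 2 ∧ H n₀ < δ / 2 :=
    ((ha.frequently (Metric.ball_mem_nhds a (half_pos hδ))).and_eventually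
      (hH₀.eventually (gt_mem_nhds (half_pos hδ)))).exists
  have hball := forall_dist_lt_of_dist_add_lt hH hstep (by linarith)
  have hdist : ∀ n, n₀ ≤ n → dist (x n) a ≤ H n := by
    intro n hn
    refine le_of_forall_pos_le_add fun ε hε => ?_
    obtain ⟨m, hnm, hm⟩ := frequently_atTop.1 (ha.frequently (Metric.ball_mem_nhds a hε)) n
    have := dist_le_sub_of_forall_dist_succ_le hnm fun k hk _ => hstep k (hball k (hn.trans hk))
    linarith [dist_triangle (x n) (x m) a, hH m, Metric.mem_ball.1 hm]
  exact tendsto_iff_dist_tendsto_zero.2 <|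
    squeeze_zero' (.of_forall fun _ => dist_nonneg) (eventually_atTop.2 ⟨n₀, hdist⟩) hH₀

end FiniteLength

theorem stmt_14_general {N : ℕ} (f : EuclideanSpace ℝ (Fin N) → ℝ)
    (hf : ContDiff ℝ 1 f)
    (M : Set (EuclideanSpace ℝ (Fin N)))
    (x : ℕ → EuclideanSpace ℝ (Fin N)) (hxM : ∀ i, x i ∈ M)
    (σ : ℝ) (hσ : 0 < σ)
    (hA1 : ∀ i, f (x (i+1)) - f (x i) ≤ -σ * gNeg f M (x i) * ‖x (i+1) - x i‖)
    (hA2 : ∀ i, gNeg f M (x i) = 0 → x (i+1) = x i)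
    (xstar : EuclideanSpace ℝ (Fin N))
    (hcluster : MapClusterPt xstar Filter.atTop x)
    (δ Λ θ : ℝ) (hδ : 0 < δ) (hΛ : 0 < Λ) (hθ : θ ∈ Set.Ioc (0 : ℝ) (1/2))
    (hLoj : ∀ y ∈ M, ‖y - xstar‖ < δ →
      |f y - f xstar| ^ (1 - θ) ≤ Λ * gNeg f M y) :
    Filter.Tendsto x Filter.atTop (nhds xstar) := by
  obtain ⟨hθ₀, hθ₁⟩ := hθ
  have hg : ∀ n, 0 ≤ gNeg f M (x n) := fun n => gNeg_nonneg f M (hxM n)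
  have hdesc : ∀ n, σ * gNeg f M (x n) * ‖x (n + 1) - x n‖ ≤ f (x n) - f (x (n + 1)) :=
    fun n => by linarith [hA1 n]
  have hanti : Antitone (f ∘ x) := antitone_nat_of_succ_le fun n => sub_nonneg.1 <|
    (mul_nonneg (mul_nonneg hσ.le (hg n)) (norm_nonneg _)).trans (hdesc n)
  have hflim : Tendsto (f ∘ x) atTop (𝓝 (f xstar)) :=
    hanti.tendsto_of_mapClusterPt (hcluster.continuousAt_comp hf.continuous.continuousAt)
  have hfge : ∀ n, 0 ≤ f (x n) - f xstar := fun n => sub_nonneg.2 (hanti.le_of_tendsto hflim n)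
  refine tendsto_of_dist_succ_le_sub_of_mapClusterPt (H := fun n =>
    Λ / (σ * θ) * (f (x n) - f xstar) ^ θ) hδ
    (fun n => mul_nonneg (by positivity) (Real.rpow_nonneg (hfge n) θ)) ?_ ?_ hcluster
  · simpa [Real.zero_rpow hθ₀.ne'] using
      (((hflim.sub_const (f xstar)).rpow_const (Or.inr hθ₀.le)).const_mul (Λ / (σ * θ)))
  · intro n hn
    rw [dist_eq_norm] at hn
    rcases (hg n).eq_or_lt with h0 | hpos
    · simp [hA2 n h0.symm]
    · have hloj := hLoj (x n) (hxM n) hn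
      rw [abs_of_nonneg (hfge n)] at hloj
      rw [dist_comm, dist_eq_norm, ← mul_sub]
      exact le_mul_rpow_sub_rpow_of_descent (hfge (n + 1))
        (sub_le_sub_right (hanti n.le_succ) _) hpos hσ hθ₀ (by linarith)
        (by linarith [hdesc n]) hloj

/-- Abstract convergence theorem. If `(x_n) ⊆ M` satisfies the primary
descent condition (A1) and the stationary condition (A2), and `x*` is a cluster point at
which the Łojasiewicz inequality for the projected antigradient holds, then `x_n → x*`. -/
theorem stmt_14 {N : ℕ} (f : EuclideanSpace ℝ (Fin N) → ℝ)
    (hf : ContDiff ℝ 1 f) (hbdd : ∃ b : ℝ, ∀ y, b ≤ f y)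
    (M : Set (EuclideanSpace ℝ (Fin N))) (hM : IsClosed M)
    (x : ℕ → EuclideanSpace ℝ (Fin N)) (hxM : ∀ i, x i ∈ M)
    (σ : ℝ) (hσ : 0 < σ)
    (hA1 : ∀ i, f (x (i+1)) - f (x i) ≤ -σ * gNeg f M (x i) * ‖x (i+1) - x i‖)
    (hA2 : ∀ i, gNeg f M (x i) = 0 → x (i+1) = x i)
    (xstar : EuclideanSpace ℝ (Fin N))
    (hcluster : MapClusterPt xstar Filter.atTop x)
    (δ Λ θ : ℝ) (hδ : 0 < δ) (hΛ : 0 < Λ) (hθ : θ ∈ Set.Ioc (0 : ℝ) (1/2))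
    (hLoj : ∀ y ∈ M, ‖y - xstar‖ < δ →
      |f y - f xstar| ^ (1 - θ) ≤ Λ * gNeg f M y) :
    Filter.Tendsto x Filter.atTop (nhds xstar) :=
  stmt_14_general f hf M x hxM σ hσ hA1 hA2 xstar hcluster δ Λ θ hδ hΛ hθ hLoj
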